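/- arXiv:2106.14940 — 2 statements merged into one kernel-verified Lean document; each statement's English description precedes it below -/
import Mathlib

section
/- Let c ∈ ℂ with Re(c) > 0 and Im(c) > 0, and let A, B, α, β be the associated Loewner parameters for the driving function c√(1−t). Then Re(A) > 0, Im(A) > 0 and |A| > 2; Re(B) > 0, Im(B) < 0 and |B| < 2; Re(α) < 1/2 and Im(α) > 0; and Re(β) > 1/2 and Im(β) < 0. -/
/-!
Write `s = (c² - 16)^(1/2)`, so that `A, B = (c ± s)/2` and `α, β = (1 ∓ c/s)/2`.
Since `Im (c² - 16) = 2 Re c Im c > 0` and the principal square root has nonnegative real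
part, `s` lies in the open first quadrant. Comparing real and imaginary parts of
`s² = c² - 16` then gives `Re s < Re c` and `Im c < Im s`, which fixes the signs of
`Re (c / s)`, `Im (c / s)` and of the parts of `B`. Finally `A B = (c² - s²)/4 = 4` and
`|B| < |A|` because `⟪c, s⟫ > 0`, so `|B| < 2 < |A|`.
-/

open scoped InnerProductSpace

namespace Complex

theorem cpow_inv_two_re_nonneg (w : ℂ) : 0 ≤ (w ^ (2⁻¹ : ℂ)).re := by
  rcases eq_or_ne w 0 with rfl | hw
  · simp
  rw [cpow_def_of_ne_zero hw, exp_re]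
  refine mul_nonneg (Real.exp_pos _).le (Real.cos_nonneg_of_mem_Icc ⟨?_, ?_⟩)
  all_goals
    simp only [mul_im, log_re, log_im, inv_re, inv_im]
    norm_num
    linarith [neg_pi_lt_arg w, arg_le_pi w]

theorem cpow_inv_two_re_pos_and_im_pos {w : ℂ} (hw : 0 < w.im) :
    0 < (w ^ (2⁻¹ : ℂ)).re ∧ 0 < (w ^ (2⁻¹ : ℂ)).im := by
  set s := w ^ (2⁻¹ : ℂ)
  have him : w.im = 2 * s.re * s.im := by
    rw [← cpow_ofNat_inv_pow w 2, sq, mul_im]; ring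
  rcases (show 0 ≤ s.re from cpow_inv_two_re_nonneg w).eq_or_lt with hre | hre
  · rw [← hre] at him; linarith
  · exact ⟨hre, by nlinarith⟩

theorem re_lt_re_and_im_lt_im_of_sq_eq_sq_sub {c s : ℂ} {d : ℝ} (hd : 0 < d)
    (hc : 0 < c.re) (hs : 0 < s.im) (h : s ^ 2 = c ^ 2 - d) :
    s.re < c.re ∧ c.im < s.im := by
  have hre : s.re ^ 2 - s.im ^ 2 = c.re ^ 2 - c.im ^ 2 - d := by
    simpa [sq] using congrArg re h
  have him : s.re * s.im = c.re * c.im := by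
    have := congrArg im h
    simp only [sq, mul_im, sub_im, ofReal_im, sub_zero] at this
    linarith
  have hsc : s.re < c.re := by
    by_contra! hcs
    have : s.im ≤ c.im := by nlinarith
    nlinarith
  exact ⟨hsc, by nlinarith⟩

theorem div_re_pos {z w : ℂ} (h : 0 < ⟪z, w⟫_ℝ) : 0 < (z / w).re := by
  have hw : w ≠ 0 := by rintro rfl; simp at h
  rw [Complex.inner, mul_re, conj_re, conj_im] at h
  rw [div_re, ← add_div]
  exact div_pos (by linarith) (normSq_pos.2 hw)

theorem div_im_neg {z w : ℂ} (h : z.im * w.re < z.re * w.im) : (z / w).im < 0 := by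
  have hw : w ≠ 0 := by rintro rfl; simp at h
  rw [div_im, div_sub_div_same]
  exact div_neg_of_neg_of_pos (by linarith) (normSq_pos.2 hw)

end Complex

theorem norm_sub_lt_norm_add_of_inner_pos {F : Type*} [NormedAddCommGroup F]
    [InnerProductSpace ℝ F] {x y : F} (h : 0 < ⟪x, y⟫_ℝ) : ‖x - y‖ < ‖x + y‖ := by
  rw [← sq_lt_sq₀ (norm_nonneg _) (norm_nonneg _), norm_add_sq_real, norm_sub_sq_real]
  linarith

theorem lt_and_lt_of_mul_eq_sq {x y r : ℝ} (hx : 0 ≤ x) (hr : 0 < r) (hxy : x < y)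
    (h : x * y = r ^ 2) : x < r ∧ r < y := by
  constructor <;> nlinarith

theorem loewner_parameters_location_strict
    (c A B α β : ℂ) (hcre : 0 < c.re) (hcim : 0 < c.im)
    (hA : A = (c + (c ^ 2 - 16) ^ ((1 : ℂ) / 2)) / 2)
    (hB : B = (c - (c ^ 2 - 16) ^ ((1 : ℂ) / 2)) / 2)
    (hα : α = (1 - c / (c ^ 2 - 16) ^ ((1 : ℂ) / 2)) / 2)
    (hβ : β = (1 + c / (c ^ 2 - 16) ^ ((1 : ℂ) / 2)) / 2) :
    (0 < A.re ∧ 0 < A.im ∧ 2 < ‖A‖) ∧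
    (0 < B.re ∧ B.im < 0 ∧ ‖B‖ < 2) ∧
    (α.re < 1 / 2 ∧ 0 < α.im) ∧
    (1 / 2 < β.re ∧ β.im < 0) := by
  rw [one_div] at hA hB hα hβ
  set s := (c ^ 2 - 16) ^ (2⁻¹ : ℂ)
  have hs2 : s ^ 2 = c ^ 2 - 16 := Complex.cpow_ofNat_inv_pow _ 2
  obtain ⟨hsre, hsim⟩ : 0 < s.re ∧ 0 < s.im := Complex.cpow_inv_two_re_pos_and_im_pos
    (by simp only [sq, Complex.sub_im, Complex.mul_im]; norm_num; positivity)
  obtain ⟨hre_lt, him_lt⟩ : s.re < c.re ∧ c.im < s.im :=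
    Complex.re_lt_re_and_im_lt_im_of_sq_eq_sq_sub (d := 16) (by norm_num) hcre hsim
      (by push_cast; exact hs2)
  have hinner : 0 < ⟪c, s⟫_ℝ := by
    rw [Complex.inner, Complex.mul_re, Complex.conj_re, Complex.conj_im]; nlinarith
  have hnorm : ‖B‖ < ‖A‖ := by
    rw [hA, hB, norm_div, norm_div]
    exact div_lt_div_of_pos_right (norm_sub_lt_norm_add_of_inner_pos hinner) (by norm_num)
  have hprod : ‖B‖ * ‖A‖ = 2 ^ 2 := by
    rw [← norm_mul, hA, hB, show (c - s) / 2 * ((c + s) / 2) = 4 by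
      linear_combination (-1 / 4 : ℂ) * hs2]
    norm_num
  obtain ⟨hB2, hA2⟩ := lt_and_lt_of_mul_eq_sq (norm_nonneg B) two_pos hnorm hprod
  have hdiv_re := Complex.div_re_pos hinner
  have hdiv_im : (c / s).im < 0 := Complex.div_im_neg (by nlinarith)
  subst hA hB hα hβ
  simp only [Complex.div_ofNat_re, Complex.div_ofNat_im, Complex.add_re, Complex.add_im,
    Complex.sub_re, Complex.sub_im, Complex.one_re, Complex.one_im]
  refine ⟨⟨?_, ?_, hA2⟩, ⟨?_, ?_, hB2⟩, ⟨?_, ?_⟩, ⟨?_, ?_⟩⟩ <;> linarith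
end

section
/- Let c ∈ ℂ with c ≠ 4 and c ≠ −4, let A, B, α, β be the associated Loewner parameters for the driving function c√(1−t), and let 0 < s < 1. Suppose g : ℝ → ℂ is continuous on [0,s], g(0) = z, g(s) = c·√(1−s), for every t ∈ [0,s) the point g(t) satisfies g(t) ≠ c·√(1−t) and g has derivative 2/(g(t) − c·√(1−t)) at t, and for every t ∈ [0,s] both g(t) − A·√(1−t) and g(t) − B·√(1−t) lie outside the slit (−∞, 0]. Then α·Log(B) + β·Log(A) + Real.log(√(1−s)) = α·Log(z − A) + β·Log(z − B), where Log is the principal complex logarithm and Real.log(√(1−s)) is regarded as a complex number. -/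
/-!
Along the Loewner flow `ġ = 2 / (g - c√(1-t))`, each `log (g - a√(1-t))` with `a² - c a + 4 = 0`
has derivative `a / (2√(1-t) (g - c√(1-t)))`. The weights `α, β` are chosen so that
`α A + β B = 0`, hence `α log (g - A√(1-t)) + β log (g - B√(1-t))` is constant on `[0, s]`.
At `t = 0` it is the right-hand side; at the capture time `g(s) = (A + B)√(1-s)`, so the two
logarithms split into `log B + log √(1-s)` and `log A + log √(1-s)`, and `α + β = 1`.
-/

open Complex Set

lemma cpow_one_half_sq (w : ℂ) : (w ^ ((1 : ℂ) / 2)) ^ 2 = w := by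
  rw [show (1 : ℂ) / 2 = ((2 : ℕ) : ℂ)⁻¹ by norm_num]
  exact cpow_nat_inv_pow w two_ne_zero

lemma sq_sub_sixteen_ne_zero {c : ℂ} (hc4 : c ≠ 4) (hc4' : c ≠ -4) : c ^ 2 - 16 ≠ 0 := by
  rw [show c ^ 2 - 16 = (c - 4) * (c + 4) by ring]
  exact mul_ne_zero (sub_ne_zero.mpr hc4) fun h => hc4' (eq_neg_of_add_eq_zero_left h)

lemma half_add_sq_sub_mul_add_four {c d : ℂ} (hd : d ^ 2 = c ^ 2 - 16) :
    ((c + d) / 2) ^ 2 - c * ((c + d) / 2) + 4 = 0 := by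
  linear_combination hd / 4

lemma loewner_weights_mul_roots_add {c d : ℂ} (hd : d ≠ 0) :
    (1 - c / d) / 2 * ((c + d) / 2) + (1 + c / d) / 2 * ((c - d) / 2) = 0 := by
  field_simp
  ring

lemma hasDerivAt_ofReal_sqrt_one_sub {t : ℝ} (ht : t < 1) :
    HasDerivAt (fun u : ℝ => (√(1 - u) : ℂ)) (-(1 / (2 * √(1 - t)))) t := by
  have h := ((Real.hasDerivAt_sqrt (sub_pos.mpr ht).ne').comp t
    ((hasDerivAt_id t).const_sub 1)).ofReal_comp
  convert h using 1
  · rfl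
  · push_cast
    ring

lemma loewner_logDeriv_eq {x c a r : ℂ} (ha : a ^ 2 - c * a + 4 = 0) (hr : r ≠ 0)
    (hxc : x - c * r ≠ 0) (hxa : x - a * r ≠ 0) :
    (2 / (x - c * r) - a * -(1 / (2 * r))) / (x - a * r) = a / (2 * r * (x - c * r)) := by
  rw [div_eq_div_iff hxa (mul_ne_zero (mul_ne_zero two_ne_zero hr) hxc)]
  field_simp
  linear_combination r * ha

noncomputable def loewnerInvariant (α β A B : ℂ) (g : ℝ → ℂ) (t : ℝ) : ℂ :=
  α * log (g t - A * √(1 - t)) + β * log (g t - B * √(1 - t))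

section LoewnerFlow

variable {g : ℝ → ℂ} {c a A B α β : ℂ} {t s : ℝ}

lemma hasDerivAt_log_sub_mul_sqrt_one_sub (ha : a ^ 2 - c * a + 4 = 0) (ht : t < 1)
    (hne : g t ≠ c * √(1 - t)) (hg : HasDerivAt g (2 / (g t - c * √(1 - t))) t)
    (hslit : g t - a * √(1 - t) ∈ slitPlane) :
    HasDerivAt (fun u => log (g u - a * √(1 - u)))
      (a / (2 * √(1 - t) * (g t - c * √(1 - t)))) t := by
  have hr : ((√(1 - t) : ℝ) : ℂ) ≠ 0 := ofReal_ne_zero.mpr (Real.sqrt_pos.mpr (by linarith)).ne'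
  rw [← loewner_logDeriv_eq ha hr (sub_ne_zero.mpr hne) (slitPlane_ne_zero hslit)]
  exact (hg.sub ((hasDerivAt_ofReal_sqrt_one_sub ht).const_mul a)).clog_real hslit

lemma hasDerivAt_loewnerInvariant (hA : A ^ 2 - c * A + 4 = 0) (hB : B ^ 2 - c * B + 4 = 0)
    (hαβ : α * A + β * B = 0) (ht : t < 1)
    (hne : g t ≠ c * √(1 - t)) (hg : HasDerivAt g (2 / (g t - c * √(1 - t))) t)
    (hslitA : g t - A * √(1 - t) ∈ slitPlane) (hslitB : g t - B * √(1 - t) ∈ slitPlane) :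
    HasDerivAt (loewnerInvariant α β A B g) 0 t := by
  have h := ((hasDerivAt_log_sub_mul_sqrt_one_sub hA ht hne hg hslitA).const_mul α).add
    ((hasDerivAt_log_sub_mul_sqrt_one_sub hB ht hne hg hslitB).const_mul β)
  rwa [mul_div_assoc', mul_div_assoc', ← add_div, hαβ, zero_div] at h

lemma continuousOn_loewnerInvariant (hcont : ContinuousOn g (Icc 0 s))
    (hslit : ∀ t ∈ Icc 0 s, g t - A * √(1 - t) ∈ slitPlane ∧ g t - B * √(1 - t) ∈ slitPlane) :
    ContinuousOn (loewnerInvariant α β A B g) (Icc 0 s) := by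
  have hlog : ∀ a : ℂ, (∀ t ∈ Icc 0 s, g t - a * √(1 - t) ∈ slitPlane) →
      ContinuousOn (fun t => log (g t - a * √(1 - t))) (Icc 0 s) := fun a ha =>
    (hcont.sub (continuousOn_const.mul (by fun_prop))).clog ha
  exact (continuousOn_const.mul (hlog A fun t ht => (hslit t ht).1)).add
    (continuousOn_const.mul (hlog B fun t ht => (hslit t ht).2))

lemma loewnerInvariant_eq_of_flow (hA : A ^ 2 - c * A + 4 = 0) (hB : B ^ 2 - c * B + 4 = 0)
    (hαβ : α * A + β * B = 0) (hs0 : 0 ≤ s) (hs1 : s < 1) (hcont : ContinuousOn g (Icc 0 s))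
    (hflow : ∀ t ∈ Ico (0 : ℝ) s,
      g t ≠ c * √(1 - t) ∧ HasDerivAt g (2 / (g t - c * √(1 - t))) t)
    (hslit : ∀ t ∈ Icc 0 s, g t - A * √(1 - t) ∈ slitPlane ∧ g t - B * √(1 - t) ∈ slitPlane) :
    loewnerInvariant α β A B g s = loewnerInvariant α β A B g 0 :=
  constant_of_has_deriv_right_zero (continuousOn_loewnerInvariant hcont hslit) (fun t ht => by
    obtain ⟨hne, hg⟩ := hflow t ht
    obtain ⟨hslitA, hslitB⟩ := hslit t (Ico_subset_Icc_self ht)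
    exact (hasDerivAt_loewnerInvariant hA hB hαβ (ht.2.trans hs1) hne hg hslitA
      hslitB).hasDerivWithinAt) s ⟨hs0, le_rfl⟩

lemma loewnerInvariant_zero :
    loewnerInvariant α β A B g 0 = α * log (g 0 - A) + β * log (g 0 - B) := by
  simp [loewnerInvariant]

lemma loewnerInvariant_of_eq_tip (hA : A ≠ 0) (hB : B ≠ 0) (ht : t < 1)
    (hgt : g t = (A + B) * √(1 - t)) :
    loewnerInvariant α β A B g t
      = α * log B + β * log A + (α + β) * (Real.log √(1 - t) : ℂ) := by
  have hr : 0 < √(1 - t) := Real.sqrt_pos.mpr (by linarith)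
  rw [loewnerInvariant, hgt, add_mul, add_sub_cancel_left, add_sub_cancel_right,
    log_mul_ofReal _ hr _ hB, log_mul_ofReal _ hr _ hA]
  ring

end LoewnerFlow

theorem loewner_tip_equation_sqrt_one_sub_t
    (c A B α β : ℂ) (hc4 : c ≠ 4) (hc4' : c ≠ -4)
    (hA : A = (c + (c ^ 2 - 16) ^ ((1 : ℂ) / 2)) / 2)
    (hB : B = (c - (c ^ 2 - 16) ^ ((1 : ℂ) / 2)) / 2)
    (hα : α = (1 - c / (c ^ 2 - 16) ^ ((1 : ℂ) / 2)) / 2)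
    (hβ : β = (1 + c / (c ^ 2 - 16) ^ ((1 : ℂ) / 2)) / 2)
    (s : ℝ) (hs0 : 0 < s) (hs1 : s < 1)
    (g : ℝ → ℂ) (z : ℂ)
    (hcont : ContinuousOn g (Set.Icc 0 s))
    (hg0 : g 0 = z) (hgs : g s = c * (Real.sqrt (1 - s) : ℂ))
    (h : ∀ t ∈ Set.Ico (0 : ℝ) s,
      g t ≠ c * (Real.sqrt (1 - t) : ℂ) ∧
      HasDerivAt g (2 / (g t - c * (Real.sqrt (1 - t) : ℂ))) t)
    (hslit : ∀ t ∈ Set.Icc (0 : ℝ) s,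
      (g t - A * (Real.sqrt (1 - t) : ℂ)) ∈ Complex.slitPlane ∧
      (g t - B * (Real.sqrt (1 - t) : ℂ)) ∈ Complex.slitPlane) :
    α * Complex.log B + β * Complex.log A
      + (Real.log (Real.sqrt (1 - s)) : ℂ)
      = α * Complex.log (z - A) + β * Complex.log (z - B) := by
  subst hA hB hα hβ
  set d := (c ^ 2 - 16) ^ ((1 : ℂ) / 2)
  have hd : d ^ 2 = c ^ 2 - 16 := cpow_one_half_sq _
  have hd0 : d ≠ 0 := fun h0 => sq_sub_sixteen_ne_zero hc4 hc4' (by rw [← hd, h0]; ring)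
  have hArt := half_add_sq_sub_mul_add_four hd
  have hBrt := half_add_sq_sub_mul_add_four (c := c) (d := -d) (by rwa [neg_sq])
  rw [← sub_eq_add_neg] at hBrt
  have hA0 : (c + d) / 2 ≠ 0 := fun h0 => by rw [h0] at hArt; norm_num at hArt
  have hB0 : (c - d) / 2 ≠ 0 := fun h0 => by rw [h0] at hBrt; norm_num at hBrt
  have hinv := loewnerInvariant_eq_of_flow hArt hBrt (loewner_weights_mul_roots_add hd0)
    hs0.le hs1 hcont h hslit
  rwa [loewnerInvariant_of_eq_tip hA0 hB0 hs1 (by rw [hgs]; ring), loewnerInvariant_zero, hg0,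
    show (1 - c / d) / 2 + (1 + c / d) / 2 = 1 by ring, one_mul] at hinv
end
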